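/- Let (X_t)_{t=1}^T be independent and identically distributed real-valued random variables with F(τ) = P(X_1 ≤ τ), let Δ ∈ ℕ, let τ ∈ ℝ, and let t_1 < t_2 < ... < t_N be deterministic time indices in {1,...,T−Δ} satisfying t_{j+1} − t_j > Δ for all j = 1,...,N−1. Then the number of trigger coincidences K = Σ_{j=1}^N 1(max_{δ=0,...,Δ} X_{t_j+δ} > τ) has the binomial distribution with parameters N and π = 1 − F(τ)^{Δ+1}; that is, P(K = k) = C(N,k) · π^k · (1−π)^{N−k} for every 0 ≤ k ≤ N. -/

import Mathlib

open MeasureTheory ProbabilityTheory Function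
open scoped ENNReal

/-!
The window of event `j` is `t_j, …, t_j + Δ`. No exceedance follows event `j` exactly when
`X_i ≤ τ` for every `i` in its window, which has probability `F(τ)^(Δ+1)` by independence and
identical distribution. Since the windows are pairwise disjoint, these events are independent,
so `K` counts the successes of `N` independent trials with success probability
`π = 1 - F(τ)^(Δ+1)`. Induction on the number of trials, splitting on the outcome of the last
one, then gives the binomial law through Pascal's rule.
-/

theorem Nat.choose_succ_mul_pow_mul_pow {R : Type*} [CommSemiring R] (n m : ℕ) (p q : R) :
    ((n + 1).choose (m + 1) : R) * p ^ (m + 1) * q ^ (n + 1 - (m + 1)) =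
      (n.choose (m + 1) : R) * p ^ (m + 1) * q ^ (n - (m + 1)) * q +
        (n.choose m : R) * p ^ m * q ^ (n - m) * p := by
  rcases lt_trichotomy m n with hmn | rfl | hnm
  · obtain ⟨d, rfl⟩ := Nat.exists_eq_add_of_lt hmn
    rw [Nat.choose_succ_succ, show m + d + 1 + 1 - (m + 1) = d + 1 by omega,
      show m + d + 1 - (m + 1) = d by omega, show m + d + 1 - m = d + 1 by omega]
    push_cast
    ring
  · simp [Nat.choose_succ_self, pow_succ]
  · simp [Nat.choose_eq_zero_of_lt, hnm, Nat.lt_succ_of_lt hnm]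

namespace ProbabilityTheory

variable {Ω ι : Type*} [MeasurableSpace Ω] {μ : Measure Ω}

theorem iIndepSet.compl {s : ι → Set Ω} (h : iIndepSet s μ) : iIndepSet (fun i ↦ (s i)ᶜ) μ := by
  have hgen : ∀ t : Set Ω, MeasurableSpace.generateFrom {tᶜ} = MeasurableSpace.generateFrom {t} :=
    fun t ↦ le_antisymm
      ((MeasurableSpace.generateFrom_le_iff _).2 <| Set.singleton_subset_iff.2
        (MeasurableSpace.measurableSet_generateFrom (Set.mem_singleton t)).compl)
      ((MeasurableSpace.generateFrom_le_iff _).2 <| Set.singleton_subset_iff.2 <| by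
        simpa using (MeasurableSpace.measurableSet_generateFrom (Set.mem_singleton tᶜ)).compl)
  rw [iIndepSet_iff_iIndep] at h ⊢
  simpa only [hgen] using h

theorem iIndepFun.iIndepSet_biInter_preimage {κ β : Type*} [MeasurableSpace β] {X : ι → Ω → β}
    (hX : iIndepFun X μ) (hXm : ∀ i, Measurable (X i)) {S : ι → Set β}
    (hS : ∀ i, MeasurableSet (S i)) {B : κ → Finset ι} (hB : Pairwise (Disjoint on B)) :
    iIndepSet (fun j ↦ ⋂ i ∈ B j, X i ⁻¹' S i) μ := by
  classical
  have hprod : ∀ J : Finset ι, μ (⋂ i ∈ J, X i ⁻¹' S i) = ∏ i ∈ J, μ (X i ⁻¹' S i) :=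
    fun J ↦ hX.meas_biInter fun i _ ↦ ⟨S i, hS i, rfl⟩
  refine (iIndepSet_iff_meas_biInter fun j ↦
    Finset.measurableSet_biInter _ fun i _ ↦ hXm i (hS i)).2 fun J ↦ ?_
  rw [← Finset.set_biInter_biUnion, hprod, Finset.prod_biUnion (hB.set_pairwise _)]
  exact Finset.prod_congr rfl fun j _ ↦ (hprod (B j)).symm

theorem iIndepFun.measure_biInter_preimage_eq_pow {β : Type*} [MeasurableSpace β]
    {X : ι → Ω → β} (hX : iIndepFun X μ) (hXm : ∀ i, Measurable (X i))
    (hident : ∀ i j, μ.map (X i) = μ.map (X j)) {S : Set β} (hS : MeasurableSet S)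
    (B : Finset ι) (i₀ : ι) :
    μ (⋂ i ∈ B, X i ⁻¹' S) = μ (X i₀ ⁻¹' S) ^ B.card := by
  rw [hX.meas_biInter fun i _ ↦ ⟨S, hS, rfl⟩, Finset.prod_congr rfl fun i _ ↦ ?_,
    Finset.prod_const]
  rw [← Measure.map_apply (hXm i) hS, hident i i₀, Measure.map_apply (hXm i₀) hS]

theorem iIndepSet.measure_sum_indicator_eq {E : ι → Set Ω} (hE : iIndepSet E μ)
    (hEm : ∀ i, MeasurableSet (E i)) {p : ℝ≥0∞} (hp : ∀ i, μ (E i) = p) (s : Finset ι) (k : ℕ) :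
    μ {ω | ∑ i ∈ s, (E i).indicator (fun _ ↦ (1 : ℕ)) ω = k} =
      (s.card.choose k : ℝ≥0∞) * p ^ k * (1 - p) ^ (s.card - k) := by
  classical
  have := hE.isProbabilityMeasure
  induction s using Finset.induction_on generalizing k with
  | empty => cases k <;> simp
  | insert a s ha ih =>
    set S : Ω → ℕ := fun ω ↦ ∑ i ∈ s, (E i).indicator (fun _ ↦ 1) ω
    have hindep : IndepFun S ((E a).indicator fun _ ↦ 1) μ := by
      simpa [S, Finset.sum_fn] using hE.iIndepFun_indicator.indepFun_finsetSum_of_notMem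
        (fun i ↦ measurable_const.indicator (hEm i)) ha
    have hSm : Measurable S := Finset.measurable_sum _ fun i _ ↦ measurable_const.indicator (hEm i)
    have hinter : ∀ j, μ ({ω | S ω = j} ∩ E a) = μ {ω | S ω = j} * p := fun j ↦ by
      simpa [Set.preimage, Set.indicator_apply, hp] using hindep.measure_inter_preimage_eq_mul _ _
        (measurableSet_singleton j) (measurableSet_singleton 1)
    have hdiff : ∀ j, μ ({ω | S ω = j} \ E a) = μ {ω | S ω = j} * (1 - p) := fun j ↦ by
      rw [Set.sdiff_eq, ← hp a, ← prob_compl_eq_one_sub (hEm a)]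
      simpa [Set.preimage, Set.indicator_apply, Set.compl_def] using
        hindep.measure_inter_preimage_eq_mul _ _
          (measurableSet_singleton j) (measurableSet_singleton 0)
    rw [Finset.card_insert_of_notMem ha]
    simp_rw [Finset.sum_insert ha]
    cases k with
    | zero =>
      have hset : {ω | (E a).indicator (fun _ ↦ 1) ω + S ω = 0} = {ω | S ω = 0} \ E a := by
        ext ω; by_cases h : ω ∈ E a <;> simp [h]
      rw [hset, hdiff, ih]
      simp [pow_succ]
    | succ m =>
      have hset : {ω | (E a).indicator (fun _ ↦ 1) ω + S ω = m + 1} =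
          ({ω | S ω = m + 1} \ E a) ∪ ({ω | S ω = m} ∩ E a) := by
        ext ω; by_cases h : ω ∈ E a <;> simp [h]; omega
      rw [hset, measure_union (Set.disjoint_sdiff_left.mono_right Set.inter_subset_right)
        ((show MeasurableSet {ω | S ω = m} from hSm (measurableSet_singleton m)).inter (hEm a)),
        hdiff, hinter, ih, ih, Nat.choose_succ_mul_pow_mul_pow]

end ProbabilityTheory

theorem ENNReal.ofReal_choose_mul_pow_mul_pow {π : ℝ} (h0 : 0 ≤ π) (h1 : π ≤ 1) (n k : ℕ) :
    ENNReal.ofReal (n.choose k * π ^ k * (1 - π) ^ (n - k)) =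
      n.choose k * ENNReal.ofReal π ^ k * (1 - ENNReal.ofReal π) ^ (n - k) := by
  rw [ENNReal.ofReal_mul (by positivity), ENNReal.ofReal_mul (by positivity),
    ENNReal.ofReal_natCast, ENNReal.ofReal_pow h0, ENNReal.ofReal_pow (sub_nonneg.2 h1),
    ENNReal.ofReal_sub _ h0, ENNReal.ofReal_one]

theorem add_lt_of_lt_of_forall_add_lt_succ {ts : ℕ → ℕ} {Δ N : ℕ}
    (hgap : ∀ j, j + 1 < N → ts j + Δ < ts (j + 1)) {i j : ℕ} (hij : i < j) (hjN : j < N) :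
    ts i + Δ < ts j := by
  induction j, hij using Nat.le_induction with
  | base => exact hgap i hjN
  | succ j hij ih => have := ih (by omega); have := hgap j hjN; omega

theorem pairwise_disjoint_image_add_range {ts : ℕ → ℕ} {Δ N : ℕ}
    (hgap : ∀ j, j + 1 < N → ts j + Δ < ts (j + 1)) :
    Pairwise (Disjoint on fun j : Fin N ↦ (Finset.range (Δ + 1)).image (ts j + ·)) := by
  have key : ∀ i j : Fin N, i < j →
      Disjoint ((Finset.range (Δ + 1)).image (ts i + ·))
        ((Finset.range (Δ + 1)).image (ts j + ·)) :=
    fun i j hij ↦ by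
      have := add_lt_of_lt_of_forall_add_lt_succ hgap hij j.isLt
      simp only [Finset.disjoint_left, Finset.mem_image, Finset.mem_range]
      omega
  intro i j hij
  rcases hij.lt_or_gt with h | h
  · exact key i j h
  · exact (key j i h).symm

theorem threshold_trigger_coincidences_binomial_general
    {Ω : Type*} [MeasureSpace Ω] [IsProbabilityMeasure (ℙ : Measure Ω)]
    (X : ℕ → Ω → ℝ) (hmeas : ∀ t, Measurable (X t))
    (hindep : iIndepFun X ℙ)
    (hident : ∀ s t, Measure.map (X s) ℙ = Measure.map (X t) ℙ)
    (τ : ℝ) (F : ℝ) (hF0 : 0 ≤ F) (hF : ℙ {ω | X 1 ω ≤ τ} = ENNReal.ofReal F)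
    (Δ N : ℕ) (ts : ℕ → ℕ)
    (hgap : ∀ j, j + 1 < N → ts j + Δ < ts (j + 1))
    (k : ℕ) :
    ℙ {ω | (∑ j ∈ Finset.range N,
        if τ < (Finset.range (Δ + 1)).sup' Finset.nonempty_range_add_one
            (fun δ => X (ts j + δ) ω) then 1 else 0) = k}
      = ENNReal.ofReal ((N.choose k : ℝ) * (1 - F ^ (Δ + 1)) ^ k
          * (1 - (1 - F ^ (Δ + 1))) ^ (N - k)) := by
  classical
  set B : Fin N → Finset ℕ := fun j ↦ (Finset.range (Δ + 1)).image (ts j + ·)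
  set E : Fin N → Set Ω := fun j ↦ (⋂ i ∈ B j, X i ⁻¹' Set.Iic τ)ᶜ
  have hEm : ∀ j, MeasurableSet (E j) := fun j ↦
    (Finset.measurableSet_biInter _ fun i _ ↦ hmeas i measurableSet_Iic).compl
  have hE : iIndepSet E ℙ := (hindep.iIndepSet_biInter_preimage hmeas
    (fun _ ↦ measurableSet_Iic) (pairwise_disjoint_image_add_range hgap)).compl
  have hpE : ∀ j, ℙ (E j) = 1 - ENNReal.ofReal F ^ (Δ + 1) := fun j ↦ by
    rw [prob_compl_eq_one_sub (hEm j).of_compl,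
      hindep.measure_biInter_preimage_eq_pow hmeas hident measurableSet_Iic _ 1,
      Finset.card_image_of_injective _ (add_right_injective _),
      Finset.card_range, ← hF]
    rfl
  have hK : {ω | (∑ j ∈ Finset.range N,
      if τ < (Finset.range (Δ + 1)).sup' Finset.nonempty_range_add_one
          (fun δ => X (ts j + δ) ω) then 1 else 0) = k} =
      {ω | ∑ j : Fin N, (E j).indicator (fun _ ↦ 1) ω = k} := by
    ext ω
    rw [Set.mem_ofPred_eq, Set.mem_ofPred_eq, Finset.sum_range]
    refine Iff.of_eq (congrArg (· = k) (Finset.sum_congr rfl fun j _ ↦ ?_))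
    simp [E, B, Set.indicator_apply, Finset.lt_sup'_iff]
  have hFpow1 : F ^ (Δ + 1) ≤ 1 := pow_le_one₀ hF0 (ENNReal.ofReal_le_one.1 (hF ▸ prob_le_one))
  have hπ : ENNReal.ofReal (1 - F ^ (Δ + 1)) = 1 - ENNReal.ofReal F ^ (Δ + 1) := by
    rw [ENNReal.ofReal_sub _ (by positivity), ENNReal.ofReal_one, ENNReal.ofReal_pow hF0]
  rw [hK, hE.measure_sum_indicator_eq hEm hpE, Finset.card_univ, Fintype.card_fin,
    ENNReal.ofReal_choose_mul_pow_mul_pow (sub_nonneg.2 hFpow1)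
      (sub_le_self _ (pow_nonneg hF0 _)), hπ]

/-- For an iid real-valued time series `(X_t)_{t=1}^T` with `F(τ) = P(X_1 ≤ τ)`, and
deterministic event times `t_1 < ... < t_N` in `{1,...,T-Δ}` separated by more than `Δ`
time steps, the number of trigger coincidences
`K = Σ_j 1(max_{δ=0,...,Δ} X_{t_j+δ} > τ)` is binomially distributed with
parameters `N` and `π = 1 - F(τ)^(Δ+1)`. -/
theorem threshold_trigger_coincidences_binomial
    {Ω : Type*} [MeasureSpace Ω] [IsProbabilityMeasure (ℙ : Measure Ω)]
    (X : ℕ → Ω → ℝ) (hmeas : ∀ t, Measurable (X t))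
    (hindep : iIndepFun X ℙ)
    (hident : ∀ s t, Measure.map (X s) ℙ = Measure.map (X t) ℙ)
    (τ : ℝ) (F : ℝ) (hF0 : 0 ≤ F) (hF : ℙ {ω | X 1 ω ≤ τ} = ENNReal.ofReal F)
    (T Δ N : ℕ) (ts : ℕ → ℕ)
    (hrange : ∀ j < N, 1 ≤ ts j ∧ ts j + Δ ≤ T)
    (hgap : ∀ j, j + 1 < N → ts j + Δ < ts (j + 1))
    (k : ℕ) (hk : k ≤ N) :
    ℙ {ω | (∑ j ∈ Finset.range N,
        if τ < (Finset.range (Δ + 1)).sup' Finset.nonempty_range_add_one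
            (fun δ => X (ts j + δ) ω) then 1 else 0) = k}
      = ENNReal.ofReal ((N.choose k : ℝ) * (1 - F ^ (Δ + 1)) ^ k
          * (1 - (1 - F ^ (Δ + 1))) ^ (N - k)) :=
  threshold_trigger_coincidences_binomial_general X hmeas hindep hident τ F hF0 hF Δ N ts hgap k
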